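/- The function g : (0,1) → ℝ defined by g(x) = φ(t_x), where t_x is the unique real with Φ^c(t_x) = x, is strictly concave on (0,1); explicitly, for all reals t₁ ≠ t₂ and all λ ∈ (0,1), if t is the unique real with Φ^c(t) = λ·Φ^c(t₁) + (1 − λ)·Φ^c(t₂), then φ(t) > λ·φ(t₁) + (1 − λ)·φ(t₂). -/

import Mathlib

open MeasureTheory Set

/-- Standard normal density. -/
noncomputable def phi (t : ℝ) : ℝ := Real.exp (-t ^ 2 / 2) / Real.sqrt (2 * Real.pi)

/-- Standard normal CDF. -/
noncomputable def Phi (t : ℝ) : ℝ := ∫ u in Set.Iic t, phi u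

/-- Standard normal complementary CDF. -/
noncomputable def Phic (t : ℝ) : ℝ := 1 - Phi t

/-!
The derivatives `φ' = -t φ` and `(Φᶜ)' = -φ` say that `φ`, viewed as a function of `x = Φᶜ(t)`,
has derivative `t`, which decreases as `x` increases. Without inverting `Φᶜ`: for `t₁ < t < t₂`,
Cauchy's mean value theorem writes the slopes of `φ` against `Φᶜ` on `[t₁, t]` and `[t, t₂]` as
points `c₁ < t < c₂`, and the concavity gap is `λ (1 - λ) (Φᶜ t₁ - Φᶜ t₂) (c₂ - c₁) > 0`.
-/

theorem exists_mem_Ioo_sub_eq_mul_sub_of_hasDerivAt {f g g' r : ℝ → ℝ}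
    (hf : ∀ x, HasDerivAt f (r x * g' x) x) (hg : ∀ x, HasDerivAt g (g' x) x)
    (hg' : ∀ x, g' x ≠ 0) {a b : ℝ} (hab : a < b) :
    ∃ c ∈ Ioo a b, f b - f a = r c * (g b - g a) := by
  obtain ⟨c, hc, h⟩ := exists_ratio_hasDerivAt_eq_ratio_slope f _ hab
    (fun x _ ↦ (hf x).continuousAt.continuousWithinAt) (fun x _ ↦ hf x)
    g g' (fun x _ ↦ (hg x).continuousAt.continuousWithinAt) (fun x _ ↦ hg x)
  refine ⟨c, hc, mul_right_cancel₀ (hg' c) ?_⟩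
  linear_combination -h

/-- `f ∘ g⁻¹` is strictly concave on the range of `g`, since its derivative `r ∘ g⁻¹` is strictly
decreasing. -/
theorem lt_of_hasDerivAt_eq_mul_of_strictMono {f g g' r : ℝ → ℝ}
    (hf : ∀ x, HasDerivAt f (r x * g' x) x) (hg : ∀ x, HasDerivAt g (g' x) x)
    (hg' : ∀ x, g' x < 0) (hr : StrictMono r) {t₁ t₂ t lam : ℝ} (hne : t₁ ≠ t₂)
    (hlam : lam ∈ Ioo (0 : ℝ) 1) (ht : g t = lam * g t₁ + (1 - lam) * g t₂) :
    lam * f t₁ + (1 - lam) * f t₂ < f t := by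
  wlog h12 : t₁ < t₂ generalizing t₁ t₂ lam
  · have := this (lam := 1 - lam) hne.symm ⟨by linarith [hlam.2], by linarith [hlam.1]⟩
      (by linarith) (hne.lt_or_gt.resolve_left h12)
    linarith
  obtain ⟨hlam₀, hlam₁⟩ := hlam
  have hg_anti : StrictAnti g :=
    strictAnti_of_deriv_neg fun x ↦ (hg x).deriv ▸ hg' x
  have hgap : g t₂ < g t₁ := hg_anti h12
  have h₁ : t₁ < t := hg_anti.lt_iff_gt.mp (by nlinarith)
  have h₂ : t < t₂ := hg_anti.lt_iff_gt.mp (by nlinarith)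
  obtain ⟨c₁, hc₁, hf₁⟩ := exists_mem_Ioo_sub_eq_mul_sub_of_hasDerivAt hf hg
    (fun x ↦ (hg' x).ne) h₁
  obtain ⟨c₂, hc₂, hf₂⟩ := exists_mem_Ioo_sub_eq_mul_sub_of_hasDerivAt hf hg
    (fun x ↦ (hg' x).ne) h₂
  have hr₁₂ : r c₁ < r c₂ := hr (hc₁.2.trans hc₂.1)
  have key : f t - (lam * f t₁ + (1 - lam) * f t₂)
      = lam * (1 - lam) * (g t₁ - g t₂) * (r c₂ - r c₁) := by
    linear_combination lam * hf₁ - (1 - lam) * hf₂ + (lam * r c₁ - lam * r c₂ + r c₂) * ht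
  have : 0 < lam * (1 - lam) * (g t₁ - g t₂) * (r c₂ - r c₁) := by
    have := sub_pos.2 hlam₁
    have := sub_pos.2 hgap
    have := sub_pos.2 hr₁₂
    positivity
  linarith

theorem phi_eq : phi = fun x ↦ Real.exp (-(1 / 2) * x ^ 2) / Real.sqrt (2 * Real.pi) := by
  ext x
  unfold phi
  ring_nf

theorem phi_pos (t : ℝ) : 0 < phi t := by
  unfold phi
  positivity

theorem continuous_phi : Continuous phi := by
  unfold phi
  fun_prop

theorem integrable_phi : Integrable phi :=
  phi_eq ▸ (integrable_exp_neg_mul_sq (by norm_num)).div_const _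

theorem hasDerivAt_phi (t : ℝ) : HasDerivAt phi (-t * phi t) t := by
  rw [phi_eq]
  refine (((hasDerivAt_pow 2 t).const_mul _).exp.div_const _).congr_deriv ?_
  simp only [Nat.cast_ofNat]
  ring

theorem Phi_eq_add_intervalIntegral (x : ℝ) : Phi x = Phi 0 + ∫ u in (0 : ℝ)..x, phi u := by
  rw [← intervalIntegral.integral_Iic_sub_Iic integrable_phi.integrableOn
    integrable_phi.integrableOn, Phi, Phi]
  ring

theorem hasDerivAt_Phi (t : ℝ) : HasDerivAt Phi (phi t) t := by
  rw [funext Phi_eq_add_intervalIntegral]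
  exact ((continuous_phi.integral_hasStrictDerivAt 0 t).hasDerivAt).const_add _

theorem hasDerivAt_Phic (t : ℝ) : HasDerivAt Phic (-phi t) t :=
  (hasDerivAt_Phi t).const_sub 1

/-- The function `x ↦ φ((Φᶜ)⁻¹(x))` is strictly concave on `(0,1)`: for all
`t₁ ≠ t₂`, `λ ∈ (0,1)` and `t` with `Φᶜ(t) = λ Φᶜ(t₁) + (1-λ) Φᶜ(t₂)`, one has
`φ(t) > λ φ(t₁) + (1-λ) φ(t₂)`. -/
theorem phi_of_quantile_strictConcave
    (t₁ t₂ t lam : ℝ) (hne : t₁ ≠ t₂) (hlam : lam ∈ Set.Ioo (0 : ℝ) 1)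
    (ht : Phic t = lam * Phic t₁ + (1 - lam) * Phic t₂) :
    lam * phi t₁ + (1 - lam) * phi t₂ < phi t :=
  lt_of_hasDerivAt_eq_mul_of_strictMono (r := id)
    (fun x ↦ (hasDerivAt_phi x).congr_deriv (by simp only [id]; ring)) hasDerivAt_Phic
    (fun x ↦ neg_neg_of_pos (phi_pos x)) strictMono_id hne hlam ht
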